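/- Let A be an n×n real symmetric matrix, let E₀ be the orthogonal spectral projection of A for the eigenvalue 0 (E₀ is real symmetric, idempotent, and for every vector v, A·v = 0 ↔ E₀·v = v), and let M = K₂ ⊗ A be the Kronecker product of the 2×2 matrix K₂ = [[0,1],[1,0]] with A (the adjacency matrix of the bipartite double). Fix an index u. (1) If (E₀)_{u,u} > 1/2, then u is sedentary for A and both copies (0,u), (1,u) are sedentary for M. (2) If (E₀)_{u,u} = 1/2, then u is sedentary for A if and only if (0,u) is sedentary for M; here a vertex w is sedentary for a symmetric matrix B when inf_{t>0} |exp(itB)_{w,w}| > 0. -/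

import Mathlib

open Matrix
open scoped Kronecker

/-- Transition matrix `U(t) = exp(itA)` of the continuous-time quantum walk on the
weighted graph with real symmetric adjacency matrix `A`. -/
noncomputable def transition {m : Type*} [Fintype m] [DecidableEq m]
    (A : Matrix m m ℝ) (t : ℝ) : Matrix m m ℂ :=
  NormedSpace.exp ((Complex.I * t) • A.map (fun x : ℝ => (x : ℂ)))

/-- A vertex `u` is sedentary if `inf_{t>0} |U(t)_{u,u}| > 0`. -/
noncomputable def Sedentary {m : Type*} [Fintype m] [DecidableEq m]
    (A : Matrix m m ℝ) (u : m) : Prop :=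
  0 < ⨅ t : {t : ℝ // 0 < t}, ‖transition A t u u‖

/-- `E` is the orthogonal spectral projection of `A` for the eigenvalue `θ`:
`E` is real symmetric, idempotent, and for every vector `v`, `A·v = θ·v ↔ E·v = v`. -/
def IsSpectralProj {m : Type*} [Fintype m] [DecidableEq m]
    (A : Matrix m m ℝ) (θ : ℝ) (E : Matrix m m ℝ) : Prop :=
  E.IsSymm ∧ E * E = E ∧ ∀ v : m → ℝ, A.mulVec v = θ • v ↔ E.mulVec v = v


/-!
Since `A E₀ = 0`, the unitary `U(t) = exp(itA)` fixes the range of `E₀`, so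
`U(t) - E₀ = (1 - E₀) U(t) (1 - E₀)`, and Cauchy–Schwarz puts `U(t)_{uu}` in the closed disc with
centre `(E₀)_{uu}` and radius `1 - (E₀)_{uu}`. The eigenvectors `(1, 1)` and `(1, -1)` of `K₂`
intertwine `exp(it K₂ ⊗ A)` with `exp(±itA)`, and `exp(-itA)` is the entrywise conjugate of
`exp(itA)`, so both copies of `u` in the bipartite double have return amplitude `Re U(t)_{uu}`.
If `(E₀)_{uu} > 1/2` the disc lies in the half-plane `Re z ≥ 2 (E₀)_{uu} - 1 > 0`; if
`(E₀)_{uu} = 1/2` it is the disc `|z - 1/2| ≤ 1/2`, on which `|z|² ≤ Re z ≤ |z|`.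
-/

open NormedSpace

namespace Matrix

theorem exp_mul_eq_mul_exp_of_mul_eq {𝕜 p q : Type*} [RCLike 𝕜] [Fintype p] [DecidableEq p]
    [Fintype q] [DecidableEq q] {B : Matrix p p 𝕜} {C : Matrix q q 𝕜} {L : Matrix p q 𝕜}
    (h : B * L = L * C) : exp B * L = L * exp C := by
  have hpow (k : ℕ) : B ^ k * L = L * C ^ k := by
    induction k with
    | zero => simp
    | succ k ih => rw [pow_succ, pow_succ, Matrix.mul_assoc, h, ← Matrix.mul_assoc, ih,
        Matrix.mul_assoc]
  open scoped Matrix.Norms.Operator in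
  have hB := (exp_series_hasSum_exp' (𝕂 := 𝕜) B).map (addMonoidHomMulRight L)
    (continuous_id.matrix_mul continuous_const)
  open scoped Matrix.Norms.Operator in
  have hC := (exp_series_hasSum_exp' (𝕂 := 𝕜) C).map (addMonoidHomMulLeft L)
    (continuous_const.matrix_mul continuous_id)
  refine hB.unique (hC.congr_fun fun k => ?_)
  simp [smul_mul, Matrix.mul_smul, hpow]

theorem map_ofReal_mul {m : Type*} [Fintype m] (X Y : Matrix m m ℝ) :
    (X * Y).map (fun x : ℝ => (x : ℂ)) =
      X.map (fun x : ℝ => (x : ℂ)) * Y.map (fun x : ℝ => (x : ℂ)) :=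
  Matrix.map_mul (f := Complex.ofRealHom)

section Unitary

variable {𝕜 n : Type*} [RCLike 𝕜] [Fintype n] [DecidableEq n] {U : Matrix n n 𝕜}

open WithLp in
theorem norm_conjTranspose_mul_mul_apply_le {m : Type*} (hU : U ∈ unitaryGroup n 𝕜)
    (X : Matrix n m 𝕜) (i : m) : ‖(Xᴴ * U * X) i i‖ ≤ RCLike.re ((Xᴴ * X) i i) := by
  set x : EuclideanSpace 𝕜 n := toLp 2 fun k => X k i
  set y := toEuclideanCLM (n := n) (𝕜 := 𝕜) U x
  have hy : ‖y‖ = ‖x‖ :=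
    ContinuousLinearMap.norm_map_of_mem_unitary (Unitary.map_mem _ hU) x
  have hxy : (Xᴴ * U * X) i i = inner 𝕜 x y := by
    simp only [x, y, EuclideanSpace.inner_eq_star_dotProduct, toEuclideanCLM_toLp,
      Matrix.mul_assoc]
    simp [mul_apply, dotProduct, mulVec, mul_comm]
  have hxx : (Xᴴ * X) i i = inner 𝕜 x x := by
    simp only [x, EuclideanSpace.inner_eq_star_dotProduct]
    simp [mul_apply, dotProduct, mul_comm]
  calc ‖(Xᴴ * U * X) i i‖ ≤ ‖x‖ * ‖y‖ := hxy ▸ norm_inner_le_norm x y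
    _ = RCLike.re ((Xᴴ * X) i i) := by rw [hy, ← sq, hxx, inner_self_eq_norm_sq]

theorem norm_apply_sub_le_of_mul_eq_self {P : Matrix n n 𝕜} (hU : U ∈ unitaryGroup n 𝕜)
    (hP : P.IsHermitian) (hPP : P * P = P) (hUP : U * P = P) (i : n) :
    ‖U i i - P i i‖ ≤ 1 - RCLike.re (P i i) := by
  have hPU : P * U = P := by
    have h : Uᴴ * P = P := by
      rw [← star_eq_conjTranspose]
      nth_rw 1 [← hUP]
      rw [← Matrix.mul_assoc, mem_unitaryGroup_iff'.1 hU, Matrix.one_mul]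
    simpa [conjTranspose_mul, hP.eq] using congrArg conjTranspose h
  have hQ : (1 - P)ᴴ = 1 - P := by simp [hP.eq]
  have hQUQ : (1 - P)ᴴ * U * (1 - P) = U - P := by
    simp only [hQ, sub_mul, mul_sub, Matrix.one_mul, Matrix.mul_one, hPU, hUP, hPP]
    abel
  have hQQ : (1 - P)ᴴ * (1 - P) = 1 - P := by
    simp only [hQ, sub_mul, mul_sub, Matrix.one_mul, Matrix.mul_one, hPP]
    abel
  have h := norm_conjTranspose_mul_mul_apply_le hU (1 - P) i
  rwa [hQUQ, hQQ, sub_apply, sub_apply, one_apply_eq, map_sub, RCLike.one_re] at h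

end Unitary

def kroneckerVecOne {R m : Type*} (n : Type*) [Zero R] [DecidableEq n] (s : m → R) :
    Matrix (m × n) n R :=
  of fun p j => if p.2 = j then s p.1 else 0

section KroneckerVecOne

variable {R m n : Type*} [Fintype n] [DecidableEq n]

theorem mul_kroneckerVecOne_apply [NonUnitalNonAssocSemiring R] [Fintype m]
    (X : Matrix (m × n) (m × n) R) (s : m → R) (p : m × n) (j : n) :
    (X * kroneckerVecOne n s) p j = ∑ b, X p (b, j) * s b := by
  simp [kroneckerVecOne, mul_apply, Fintype.sum_prod_type]

theorem kroneckerVecOne_mul_apply [NonUnitalNonAssocSemiring R] (s : m → R)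
    (Y : Matrix n n R) (a : m) (i j : n) :
    (kroneckerVecOne n s * Y) (a, i) j = s a * Y i j := by
  simp [kroneckerVecOne, mul_apply]

theorem kronecker_mul_kroneckerVecOne [CommSemiring R] [Fintype m]
    (K : Matrix m m R) (B : Matrix n n R) {s : m → R} {c : R} (hs : K *ᵥ s = c • s) :
    (K ⊗ₖ B) * kroneckerVecOne n s = kroneckerVecOne n s * (c • B) := by
  ext ⟨a, i⟩ j
  have hsa : ∑ b, K a b * s b = c * s a := by simpa [mulVec, dotProduct] using congrFun hs a
  rw [mul_kroneckerVecOne_apply, kroneckerVecOne_mul_apply]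
  simp_rw [kroneckerMap_apply, smul_apply, smul_eq_mul, mul_right_comm _ (B i j),
    ← Finset.sum_mul, hsa]
  ring

end KroneckerVecOne

end Matrix

theorem Complex.two_mul_sub_one_le_re_of_norm_sub_le {z : ℂ} {e : ℝ}
    (h : ‖z - e‖ ≤ 1 - e) : 2 * e - 1 ≤ z.re := by
  have h' := (abs_le.1 ((Complex.abs_re_le_norm (z - e)).trans h)).1
  rw [Complex.sub_re, Complex.ofReal_re] at h'
  linarith

theorem Complex.sq_norm_le_re_of_norm_sub_half_le {z : ℂ} (h : ‖z - 1 / 2‖ ≤ 1 / 2) :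
    ‖z‖ ^ 2 ≤ z.re := by
  have hsq : ‖z - 1 / 2‖ ^ 2 = ‖z‖ ^ 2 - z.re + 1 / 4 := by
    simp only [Complex.sq_norm, Complex.normSq_apply, Complex.sub_re, Complex.sub_im]
    norm_num
    ring
  nlinarith [norm_nonneg (z - 1 / 2)]

theorem IsSpectralProj.mul_eq_smul {m : Type*} [Fintype m] [DecidableEq m] {A E : Matrix m m ℝ}
    {θ : ℝ} (hE : IsSpectralProj A θ E) : A * E = θ • E := by
  obtain ⟨-, hidem, hiff⟩ := hE
  ext i j
  have hcol : E *ᵥ (fun k => E k j) = fun k => E k j := by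
    funext k
    simpa [Matrix.mul_apply, Matrix.mulVec, dotProduct] using congrFun₂ hidem k j
  simpa [Matrix.mul_apply, Matrix.mulVec, dotProduct] using congrFun ((hiff _).mpr hcol) i

section Transition

variable {m : Type*} [Fintype m] [DecidableEq m]

theorem transition_neg (A : Matrix m m ℝ) (t : ℝ) :
    transition A (-t) = (transition A t)ᴴᵀ := by
  rw [transition, transition, ← Matrix.exp_conjTranspose, ← Matrix.exp_transpose]
  congr 1
  ext i j
  simp

theorem transition_transpose {A : Matrix m m ℝ} (hA : A.IsSymm) (t : ℝ) :
    (transition A t)ᵀ = transition A t := by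
  rw [transition, ← Matrix.exp_transpose]
  congr 1
  ext i j
  simp [hA.apply i j]

theorem transition_mem_unitaryGroup {A : Matrix m m ℝ} (hA : A.IsSymm) (t : ℝ) :
    transition A t ∈ Matrix.unitaryGroup m ℂ := by
  have hstar : star (transition A t) = transition A (-t) := by
    rw [transition_neg, Matrix.star_eq_conjTranspose]
    conv_lhs => rw [← transition_transpose hA]
    rfl
  rw [Matrix.mem_unitaryGroup_iff', hstar, transition, transition,
    ← Matrix.exp_add_of_commute _ _ (((Commute.refl _).smul_left _).smul_right _), ← add_smul]
  simp

theorem transition_mul_map_eq_of_mul_eq_zero {A E : Matrix m m ℝ} (h : A * E = 0) (t : ℝ) :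
    transition A t * E.map (fun x : ℝ => (x : ℂ)) = E.map (fun x : ℝ => (x : ℂ)) := by
  have hAE :
      (Complex.I * t) • A.map (fun x : ℝ => (x : ℂ)) * E.map (fun x : ℝ => (x : ℂ)) =
        E.map (fun x : ℝ => (x : ℂ)) * 0 := by
    rw [Matrix.smul_mul, ← Matrix.map_ofReal_mul, h]
    simp
  rw [transition, Matrix.exp_mul_eq_mul_exp_of_mul_eq hAE, exp_zero, Matrix.mul_one]

theorem norm_transition_apply_sub_le {A E : Matrix m m ℝ} (hA : A.IsSymm)
    (hE : IsSpectralProj A 0 E) (u : m) (t : ℝ) :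
    ‖transition A t u u - E u u‖ ≤ 1 - E u u := by
  have hherm : (E.map (fun x : ℝ => (x : ℂ))).IsHermitian := by
    ext i j
    simp [hE.1.apply i j]
  have hidem : E.map (fun x : ℝ => (x : ℂ)) * E.map (fun x : ℝ => (x : ℂ)) =
      E.map (fun x : ℝ => (x : ℂ)) := by
    rw [← Matrix.map_ofReal_mul, hE.2.1]
  simpa using Matrix.norm_apply_sub_le_of_mul_eq_self (transition_mem_unitaryGroup hA t) hherm
    hidem (transition_mul_map_eq_of_mul_eq_zero (by simpa using hE.mul_eq_smul) t) u

theorem transition_kronecker_swap_apply_self (A : Matrix m m ℝ) (a : Fin 2) (u : m) (t : ℝ) :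
    transition ((!![0, 1; 1, 0] : Matrix (Fin 2) (Fin 2) ℝ) ⊗ₖ A) t (a, u) (a, u) =
      (transition A t u u).re := by
  set B : Matrix m m ℂ := (Complex.I * t) • A.map (fun x : ℝ => (x : ℂ))
  set K : Matrix (Fin 2) (Fin 2) ℂ := !![0, 1; 1, 0]
  have hX :
      transition ((!![0, 1; 1, 0] : Matrix (Fin 2) (Fin 2) ℝ) ⊗ₖ A) t = exp (K ⊗ₖ B) := by
    rw [transition]
    congr 1
    ext ⟨a, i⟩ ⟨b, j⟩
    fin_cases a <;> fin_cases b <;> simp [K, B]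
  have hplus : exp (K ⊗ₖ B) * kroneckerVecOne m (![1, 1] : Fin 2 → ℂ) =
      kroneckerVecOne m (![1, 1] : Fin 2 → ℂ) * transition A t := by
    have h := Matrix.exp_mul_eq_mul_exp_of_mul_eq (Matrix.kronecker_mul_kroneckerVecOne K B
      (s := ![1, 1]) (c := 1) (by ext b; fin_cases b <;> simp [K]))
    rwa [one_smul] at h
  have hminus : exp (K ⊗ₖ B) * kroneckerVecOne m (![1, -1] : Fin 2 → ℂ) =
      kroneckerVecOne m (![1, -1] : Fin 2 → ℂ) * (transition A t)ᴴᵀ := by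
    have hnegB : (Complex.I * ↑(-t)) • A.map (fun x : ℝ => (x : ℂ)) = (-1 : ℂ) • B := by
      simp [B, smul_smul]
    rw [← transition_neg, transition, hnegB]
    exact Matrix.exp_mul_eq_mul_exp_of_mul_eq (Matrix.kronecker_mul_kroneckerVecOne K B
      (s := ![1, -1]) (c := -1) (by ext b; fin_cases b <;> simp [K]))
  have e1 := congrFun₂ hplus (a, u) u
  have e2 := congrFun₂ hminus (a, u) u
  rw [Matrix.mul_kroneckerVecOne_apply, Matrix.kroneckerVecOne_mul_apply, Fin.sum_univ_two]
    at e1 e2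
  rw [hX, Complex.re_eq_add_conj]
  fin_cases a
  · simp only [Fin.zero_eta, Matrix.cons_val_zero, Matrix.cons_val_one, Matrix.cons_val_fin_one,
      Matrix.transpose_apply, Matrix.conjTranspose_apply, RCLike.star_def] at e1 e2 ⊢
    linear_combination (e1 + e2) / 2
  · simp only [Fin.mk_one, Matrix.cons_val_zero, Matrix.cons_val_one, Matrix.cons_val_fin_one,
      Matrix.transpose_apply, Matrix.conjTranspose_apply, RCLike.star_def] at e1 e2 ⊢
    linear_combination (e1 - e2) / 2

theorem sedentary_iff (A : Matrix m m ℝ) (u : m) :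
    Sedentary A u ↔ ∃ c > 0, ∀ t > 0, c ≤ ‖transition A t u u‖ := by
  constructor
  · intro h
    refine ⟨_, h, fun t ht => ciInf_le ⟨0, ?_⟩ (⟨t, ht⟩ : {t : ℝ // 0 < t})⟩
    rintro _ ⟨s, rfl⟩
    exact norm_nonneg _
  · rintro ⟨c, hc, h⟩
    have : Nonempty {t : ℝ // 0 < t} := ⟨⟨1, one_pos⟩⟩
    exact hc.trans_le (le_ciInf fun t => h t t.2)

end Transition

/-- let `E₀` be the spectral projection of the real symmetric matrix `A` for
the eigenvalue `0`, and let `M = K₂ ⊗ A` be the adjacency matrix of the bipartite double.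
(1) If `(E₀)_{u,u} > 1/2` then `u` is sedentary for `A` and both copies `(0,u)`, `(1,u)`
are sedentary for `M`. (2) If `(E₀)_{u,u} = 1/2` then `u` is sedentary for `A` iff `(0,u)`
is sedentary for `M`. -/
theorem stmt13 {n : ℕ} (A : Matrix (Fin n) (Fin n) ℝ) (hA : A.IsSymm)
    (E0 : Matrix (Fin n) (Fin n) ℝ) (hE0 : IsSpectralProj A 0 E0) (u : Fin n) :
    (1 / 2 < E0 u u →
      Sedentary A u ∧
      Sedentary ((!![0, 1; 1, 0] : Matrix (Fin 2) (Fin 2) ℝ) ⊗ₖ A) (0, u) ∧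
      Sedentary ((!![0, 1; 1, 0] : Matrix (Fin 2) (Fin 2) ℝ) ⊗ₖ A) (1, u)) ∧
    (E0 u u = 1 / 2 →
      (Sedentary A u ↔
        Sedentary ((!![0, 1; 1, 0] : Matrix (Fin 2) (Fin 2) ℝ) ⊗ₖ A) (0, u))) := by
  have hz (t : ℝ) := norm_transition_apply_sub_le hA hE0 u t
  have hcopy (a : Fin 2) (t : ℝ) :
      ‖transition ((!![0, 1; 1, 0] : Matrix (Fin 2) (Fin 2) ℝ) ⊗ₖ A) t (a, u) (a, u)‖ =
        |(transition A t u u).re| := by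
    rw [transition_kronecker_swap_apply_self, Complex.norm_real, Real.norm_eq_abs]
  refine ⟨fun he => ?_, fun he => ?_⟩
  · have hre (t : ℝ) := Complex.two_mul_sub_one_le_re_of_norm_sub_le (hz t)
    have hpos : 0 < 2 * E0 u u - 1 := by linarith
    have hsed (a : Fin 2) :
        Sedentary ((!![0, 1; 1, 0] : Matrix (Fin 2) (Fin 2) ℝ) ⊗ₖ A) (a, u) :=
      (sedentary_iff _ _).2 ⟨_, hpos, fun t _ => hcopy a t ▸ (hre t).trans (le_abs_self _)⟩
    exact ⟨(sedentary_iff _ _).2 ⟨_, hpos, fun t _ => (hre t).trans (Complex.re_le_norm _)⟩,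
      hsed 0, hsed 1⟩
  · have hsq (t : ℝ) : ‖transition A t u u‖ ^ 2 ≤ (transition A t u u).re :=
      Complex.sq_norm_le_re_of_norm_sub_half_le (by norm_num [he] at hz ⊢; exact hz t)
    rw [sedentary_iff, sedentary_iff]
    constructor
    · rintro ⟨c, hc, hbound⟩
      refine ⟨c ^ 2, by positivity, fun t ht => ?_⟩
      calc c ^ 2 ≤ ‖transition A t u u‖ ^ 2 := pow_le_pow_left₀ hc.le (hbound t ht) 2
        _ ≤ |(transition A t u u).re| := (hsq t).trans (le_abs_self _)
        _ = _ := (hcopy 0 t).symm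
    · rintro ⟨c, hc, hbound⟩
      exact ⟨c, hc, fun t ht => (hcopy 0 t ▸ hbound t ht).trans (Complex.abs_re_le_norm _)⟩
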